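/- arXiv:1002.1889 — 2 statements merged into one kernel-verified Lean document; each statement's English description precedes it below -/
import Mathlib

section
/- Let (Ω, 𝓕, P) be a probability space and (f_n)_{n∈ℕ} a sequence of nonnegative a.e.-finite measurable functions. For n ∈ ℕ, let C_n be the set of all measurable functions h : Ω → [0,∞] that are P-a.e. limits of sequences taking values in the convex hull of {f_k : k ≥ n}, and let S_n be the solid hull of C_n. Then for every measurable g : Ω → [0,∞] with g ∈ S_n for all n ∈ ℕ, there exists h ∈ ⋂_{n∈ℕ} C_n with g ≤ h P-a.e.; that is, ⋂_{n∈ℕ} S_n is the solid hull of ⋂_{n∈ℕ} C_n. -/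
/-!
For each `n` pick `H n ∈ C_n` lying a.e. above `g`, and an element `W n` of the convex hull of
`{f k : k ≥ n}` close in measure to `H n`; by Borel–Cantelli, `g ≤ liminf W n` a.e. A Komlós-type
lemma for `[0, ∞]`-valued functions then yields `v n` in the convex hull of `{W k : k ≥ n}`
converging a.e. to some `h`. These `v n` are also in the convex hull of `{f k : k ≥ n}`, so `h`
lies in every `C_n`, and `h ≥ liminf W n ≥ g`.

For the Komlós-type lemma, compress `[0, ∞]` onto `[0, 1]` by the strictly concave
`x ↦ x / (1 + x)` and take `v n` asymptotically maximizing `∫ compress v` over the shrinking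
hulls. A midpoint of two late `v n` is again a candidate, so it cannot gain much; by uniform
strict concavity, `compress v n` is Cauchy in measure, and a subsequence converges a.e.
-/

open MeasureTheory Filter Set

/-- The set of all measurable `[0,∞]`-valued functions arising as `P`-a.e. limits of
sequences taking values in the convex hull of `{f k : k ≥ n}`. -/
def LimitsOfConvexTail {Ω : Type*} [MeasurableSpace Ω] (P : MeasureTheory.Measure Ω)
    (f : ℕ → Ω → ℝ) (n : ℕ) : Set (Ω → ENNReal) :=
  {g | Measurable g ∧ ∃ h : ℕ → Ω → ℝ,
    (∀ j, h j ∈ convexHull ℝ {u : Ω → ℝ | ∃ k, n ≤ k ∧ u = f k}) ∧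
    ∀ᵐ ω ∂P, Tendsto (fun j => ENNReal.ofReal (h j ω)) atTop (nhds (g ω))}

/-- The solid hull of a set `A` of `[0,∞]`-valued measurable functions:
all measurable `g` with `g ≤ h` a.e. for some `h ∈ A`. -/
def SolidHull {Ω : Type*} [MeasurableSpace Ω] (P : MeasureTheory.Measure Ω)
    (A : Set (Ω → ENNReal)) : Set (Ω → ENNReal) :=
  {g | Measurable g ∧ ∃ h ∈ A, g ≤ᵐ[P] h}

open scoped ENNReal Topology

noncomputable section

/-- `x ↦ x / (1 + x)`, an order isomorphism `[0, ∞] ≃ [0, 1]`. -/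
def compress (x : ℝ≥0∞) : ℝ := ENNReal.orderIsoUnitIntervalBirational x

@[fun_prop]
lemma continuous_compress : Continuous compress :=
  continuous_subtype_val.comp ENNReal.orderIsoUnitIntervalBirational.toHomeomorph.continuous

lemma compress_mem_Icc (x : ℝ≥0∞) : compress x ∈ Icc (0 : ℝ) 1 :=
  (ENNReal.orderIsoUnitIntervalBirational x).2

lemma norm_compress_le_one (x : ℝ≥0∞) : ‖compress x‖ ≤ 1 := by
  rw [Real.norm_eq_abs, abs_of_nonneg (compress_mem_Icc x).1]
  exact (compress_mem_Icc x).2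

lemma strictMono_compress : StrictMono compress := fun _ _ h =>
  Subtype.coe_lt_coe.2 (ENNReal.orderIsoUnitIntervalBirational.strictMono h)

lemma compress_top : compress ⊤ = 1 := by
  simp [compress]

lemma compress_of_ne_top {x : ℝ≥0∞} (hx : x ≠ ⊤) : compress x = x.toReal / (1 + x.toReal) := by
  rw [compress, ENNReal.orderIsoUnitIntervalBirational_apply_coe]
  rcases eq_or_ne x 0 with rfl | h0
  · simp
  rw [ENNReal.toReal_inv, ENNReal.toReal_add (by simp [h0]) ENNReal.one_ne_top,
    ENNReal.toReal_inv, ENNReal.toReal_one]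
  have : 0 < x.toReal := ENNReal.toReal_pos h0 hx
  field_simp

lemma compress_midpoint_lt {x y : ℝ≥0∞} (hxy : x ≠ y) :
    (compress x + compress y) / 2 < compress ((x + y) / 2) := by
  wlog hx : x ≠ ⊤ generalizing x y
  · rw [not_not.1 hx] at hxy ⊢
    simpa [add_comm] using this hxy.symm hxy.symm
  rcases eq_or_ne y ⊤ with rfl | hy
  · have : compress x < 1 := compress_top ▸ strictMono_compress (lt_top_iff_ne_top.2 hx)
    simp [ENNReal.top_div, compress_top]
    linarith
  have hm : (x + y) / 2 ≠ ⊤ := by simp [ENNReal.div_eq_top, hx, hy]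
  rw [compress_of_ne_top hx, compress_of_ne_top hy, compress_of_ne_top hm, ENNReal.toReal_div,
    ENNReal.toReal_add hx hy, ENNReal.toReal_ofNat]
  have hab : x.toReal ≠ y.toReal := (ENNReal.toReal_eq_toReal_iff' hx hy).not.2 hxy
  have ha := ENNReal.toReal_nonneg (a := x)
  have hb := ENNReal.toReal_nonneg (a := y)
  rw [div_add_div _ _ (by positivity) (by positivity), div_div,
    div_lt_div_iff₀ (by positivity) (by positivity)]
  nlinarith [sq_pos_of_ne_zero (sub_ne_zero.2 hab), mul_nonneg ha hb]

lemma compress_midpoint_le (x y : ℝ≥0∞) :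
    (compress x + compress y) / 2 ≤ compress ((x + y) / 2) := by
  rcases eq_or_ne x y with rfl | hxy
  · rw [ENNReal.add_div, ENNReal.add_halves, add_self_div_two]
  · exact (compress_midpoint_lt hxy).le

lemma exists_compress_midpoint_gain {α : ℝ} (hα : 0 < α) :
    ∃ δ > 0, ∀ x y : ℝ≥0∞, α ≤ |compress x - compress y| →
      (compress x + compress y) / 2 + δ ≤ compress ((x + y) / 2) := by
  set K := {p : ℝ≥0∞ × ℝ≥0∞ | α ≤ |compress p.1 - compress p.2|}
  rcases K.eq_empty_or_nonempty with hK | hK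
  · refine ⟨1, one_pos, fun x y hxy => ?_⟩
    exact absurd (hK ▸ hxy : (x, y) ∈ (∅ : Set _)) (notMem_empty _)
  have hKc : IsClosed K := isClosed_le continuous_const (by fun_prop)
  obtain ⟨p, hpK, hp⟩ := hKc.isCompact.exists_isMinOn hK
    (f := fun p => compress ((p.1 + p.2) / 2) - (compress p.1 + compress p.2) / 2)
    (Continuous.continuousOn (by fun_prop (disch := norm_num)))
  have hp_ne : p.1 ≠ p.2 := fun h => by
    have : α ≤ |compress p.1 - compress p.2| := hpK
    rw [h, sub_self, abs_zero] at this
    linarith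
  refine ⟨_, sub_pos.2 (compress_midpoint_lt hp_ne), fun x y hxy => ?_⟩
  have := hp (show (x, y) ∈ K from hxy)
  simp only [mem_ofPred_eq] at this
  linarith

lemma exists_tendsto_of_tendsto_compress {z : ℕ → ℝ≥0∞} {l : ℝ}
    (h : Tendsto (fun j => compress (z j)) atTop (𝓝 l)) : ∃ c, Tendsto z atTop (𝓝 c) := by
  let e := ENNReal.orderIsoUnitIntervalBirational.toHomeomorph
  have hl : l ∈ Icc (0 : ℝ) 1 :=
    isClosed_Icc.mem_of_tendsto h (.of_forall fun j => compress_mem_Icc _)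
  refine ⟨e.symm ⟨l, hl⟩, ?_⟩
  have : Tendsto (fun j => e (z j)) atTop (𝓝 ⟨l, hl⟩) := tendsto_subtype_rng.2 h
  simpa [Function.comp_def] using (e.symm.continuous.tendsto _).comp this

lemma le_liminf_of_tendsto_dist_compress {a : ℝ≥0∞} {b c : ℕ → ℝ≥0∞} (hab : ∀ n, a ≤ b n)
    (h : Tendsto (fun n => dist (compress (c n)) (compress (b n))) atTop (𝓝 0)) :
    a ≤ liminf c atTop := by
  refine le_of_forall_lt_imp_le_of_dense fun x hx => le_liminf_of_le (by isBoundedDefault) ?_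
  have hε : 0 < compress a - compress x := sub_pos.2 (strictMono_compress hx)
  filter_upwards [h.eventually_lt_const hε] with n hn
  refine (strictMono_compress.lt_iff_lt.1 ?_).le
  have := strictMono_compress.monotone (hab n)
  linarith [neg_abs_le (compress (c n) - compress (b n)), (Real.dist_eq _ _).symm.trans_lt hn]

section TailHull

variable {E : Type*} [AddCommGroup E] [Module ℝ E]

def tailHull (w : ℕ → E) (n : ℕ) : Set E := convexHull ℝ {u | ∃ k, n ≤ k ∧ u = w k}

lemma tailHull_antitone (w : ℕ → E) : Antitone (tailHull w) := fun _ _ hmn =>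
  convexHull_mono fun _ ⟨k, hk, hu⟩ => ⟨k, hmn.trans hk, hu⟩

lemma mem_tailHull_self (w : ℕ → E) (n : ℕ) : w n ∈ tailHull w n :=
  subset_convexHull ℝ _ ⟨n, le_rfl, rfl⟩

lemma tailHull_subset_of_forall_mem {w W : ℕ → E} (hW : ∀ k, W k ∈ tailHull w k) (n : ℕ) :
    tailHull W n ⊆ tailHull w n :=
  convexHull_min (fun _ ⟨k, hk, hu⟩ => hu ▸ tailHull_antitone w hk (hW k)) (convex_convexHull ℝ _)

end TailHull

section TailHullFunctions

variable {Ω : Type*}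

lemma tailHull_subset_measurable_ae_nonneg [MeasurableSpace Ω] {P : Measure Ω} {w : ℕ → Ω → ℝ}
    (hw : ∀ k, Measurable (w k)) (hw0 : ∀ k, 0 ≤ᵐ[P] w k) (n : ℕ) :
    tailHull w n ⊆ {u | Measurable u ∧ 0 ≤ᵐ[P] u} := by
  refine convexHull_min (fun _ ⟨k, _, hu⟩ => hu ▸ ⟨hw k, hw0 k⟩) ?_
  intro a ha b hb s t hs ht _
  refine ⟨(ha.1.const_smul s).add (hb.1.const_smul t), ?_⟩
  filter_upwards [ha.2, hb.2] with ω haω hbω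
  simp only [Pi.zero_apply, Pi.add_apply, Pi.smul_apply, smul_eq_mul] at haω hbω ⊢
  positivity

lemma iInf_le_ofReal_of_mem_tailHull {w : ℕ → Ω → ℝ} {n : ℕ} {v : Ω → ℝ}
    (hv : v ∈ tailHull w n) (ω : Ω) : ⨅ k ≥ n, ENNReal.ofReal (w k ω) ≤ ENNReal.ofReal (v ω) := by
  set lb : Ω → ℝ≥0∞ := fun ω => ⨅ k ≥ n, ENNReal.ofReal (w k ω)
  have hconvex : Convex ℝ (univ.pi fun ω => {t | lb ω ≤ ENNReal.ofReal t}) :=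
    convex_pi fun ω _ => (isUpperSet_setOfPred.2 fun _ _ hst h =>
      h.trans (ENNReal.ofReal_le_ofReal hst)).ordConnected.convex
  refine convexHull_min ?_ hconvex hv ω (mem_univ ω)
  rintro _ ⟨k, hk, rfl⟩ ω -
  exact iInf₂_le (f := fun k (_ : k ≥ n) => ENNReal.ofReal (w k ω)) k hk

lemma liminf_le_of_tendsto_of_mem_tailHull {w v : ℕ → Ω → ℝ} (hv : ∀ n, v n ∈ tailHull w n)
    {ω : Ω} {c : ℝ≥0∞} (h : Tendsto (fun n => ENNReal.ofReal (v n ω)) atTop (𝓝 c)) :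
    liminf (fun n => ENNReal.ofReal (w n ω)) atTop ≤ c := by
  rw [liminf_eq_iSup_iInf_of_nat]
  exact iSup_le fun n => ge_of_tendsto h <| eventually_atTop.2
    ⟨n, fun m hm => (biInf_mono fun k hk => hm.trans hk).trans
      (iInf_le_ofReal_of_mem_tailHull (hv m) ω)⟩

end TailHullFunctions

section ConvergenceInMeasure

variable {Ω E : Type*} [MeasurableSpace Ω] {P : Measure Ω}

lemma ae_eventually_lt_half_pow {s : ℕ → Ω → ℝ}
    (hs : ∀ j, P {ω | (1 / 2 : ℝ) ^ j ≤ s j ω} ≤ ENNReal.ofReal ((1 / 2) ^ j)) :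
    ∀ᵐ ω ∂P, ∀ᶠ j in atTop, s j ω < (1 / 2) ^ j := by
  have hsum : ∑' j, P {ω | (1 / 2 : ℝ) ^ j ≤ s j ω} ≠ ⊤ :=
    ne_top_of_le_ne_top
      ((ENNReal.ofReal_tsum_of_nonneg (fun j => by positivity) summable_geometric_two) ▸
        ENNReal.ofReal_ne_top) (ENNReal.tsum_le_tsum hs)
  filter_upwards [ae_eventually_notMem hsum] with ω hω
  simpa using hω

variable [PseudoMetricSpace E]

lemma exists_strictMono_ae_cauchySeq {X : ℕ → Ω → E}
    (hX : ∀ ε > 0, ∃ N, ∀ m ≥ N, ∀ n ≥ N, P {ω | ε ≤ dist (X m ω) (X n ω)} ≤ ENNReal.ofReal ε) :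
    ∃ ns : ℕ → ℕ, StrictMono ns ∧ ∀ᵐ ω ∂P, CauchySeq fun j => X (ns j) ω := by
  choose N hN using fun j : ℕ => hX ((1 / 2) ^ j) (by positivity)
  obtain ⟨ns, hns, hNns⟩ := extraction_forall_of_eventually fun j => eventually_ge_atTop (N j)
  refine ⟨ns, hns, ?_⟩
  filter_upwards [ae_eventually_lt_half_pow fun j =>
    hN j _ (hNns j) _ ((hNns j).trans (hns (Nat.lt_succ_self j)).le)] with ω hω
  obtain ⟨J, hJ⟩ := eventually_atTop.1 hω
  refine (cauchySeq_shift J).1 (cauchySeq_of_le_geometric_two (C := 2) fun j => ?_)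
  calc dist (X (ns (j + J)) ω) (X (ns (j + 1 + J)) ω) ≤ (1 / 2) ^ (j + J) := by
        simpa [add_right_comm] using (hJ _ le_add_self).le
    _ ≤ (1 / 2) ^ j := pow_le_pow_of_le_one (by norm_num) (by norm_num) le_self_add
    _ = 2 / 2 / 2 ^ j := by simp

lemma exists_ae_tendsto_dist_diagonal [IsFiniteMeasure P] {X : ℕ → ℕ → Ω → E} {Y : ℕ → Ω → E}
    (hX : ∀ n j, AEStronglyMeasurable (X n j) P)
    (h : ∀ n, ∀ᵐ ω ∂P, Tendsto (fun j => X n j ω) atTop (𝓝 (Y n ω))) :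
    ∃ j : ℕ → ℕ, ∀ᵐ ω ∂P, Tendsto (fun n => dist (X n (j n) ω) (Y n ω)) atTop (𝓝 0) := by
  have hsmall : ∀ n, ∃ j,
      P {ω | (1 / 2 : ℝ) ^ n ≤ dist (X n j ω) (Y n ω)} ≤ ENNReal.ofReal ((1 / 2) ^ n) :=
    fun n => ((tendstoInMeasure_iff_dist.1 (tendstoInMeasure_of_tendsto_ae (hX n) (h n)) _
      (by positivity)).eventually_le_const (by positivity)).exists
  choose j hj using hsmall
  refine ⟨j, ?_⟩
  filter_upwards [ae_eventually_lt_half_pow hj] with ω hω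
  exact squeeze_zero' (.of_forall fun n => dist_nonneg) (hω.mono fun n hn => hn.le)
    (tendsto_pow_atTop_nhds_zero_of_lt_one (by norm_num) (by norm_num))

end ConvergenceInMeasure

lemma exists_seq_asymptotically_maximizing {α : Type*} {T : ℕ → Set α} (hT : Antitone T)
    (hne : ∀ n, (T n).Nonempty) {Ψ : α → ℝ} {C : ℝ} (hΨ : ∀ u, |Ψ u| ≤ C) :
    ∃ v : ℕ → α, (∀ n, v n ∈ T n) ∧ ∀ ε > 0, ∃ N, ∀ n ≥ N, ∀ u ∈ T N, Ψ u < Ψ (v n) + ε := by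
  set S : ℕ → ℝ := fun n => sSup (Ψ '' T n)
  have hbdd : ∀ n, BddAbove (Ψ '' T n) := fun n =>
    ⟨C, forall_mem_image.2 fun u _ => (le_abs_self _).trans (hΨ u)⟩
  have hle : ∀ n, ∀ u ∈ T n, Ψ u ≤ S n := fun n u hu => le_csSup (hbdd n) (mem_image_of_mem Ψ hu)
  have hS : Antitone S := fun m n hmn =>
    csSup_le_csSup (hbdd m) ((hne n).image Ψ) (image_mono (hT hmn))
  have hSbdd : BddBelow (range S) := ⟨-C, forall_mem_range.2 fun n =>
    let ⟨u, hu⟩ := hne n; (neg_le_of_abs_le (hΨ u)).trans (hle n u hu)⟩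
  have hchoice : ∀ n : ℕ, ∃ u ∈ T n, S n - 1 / (n + 1) < Ψ u := fun n => by
    obtain ⟨_, ⟨u, hu, rfl⟩, h⟩ :=
      exists_lt_of_lt_csSup ((hne n).image Ψ) (sub_lt_self (S n) Nat.one_div_pos_of_nat)
    exact ⟨u, hu, h⟩
  choose v hvT hv using hchoice
  refine ⟨v, hvT, fun ε hε => ?_⟩
  obtain ⟨N, hN⟩ := eventually_atTop.1
    (((tendsto_atTop_ciInf hS hSbdd).eventually_lt_const (lt_add_of_pos_right _ (half_pos hε))).and
      (tendsto_one_div_add_atTop_nhds_zero_nat.eventually_lt_const (half_pos hε)))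
  refine ⟨N, fun n hn u hu => ?_⟩
  linarith [ciInf_le hSbdd n, hle N u hu, (hN N le_rfl).1, (hN n hn).2, hv n]

section Komlos

variable {Ω : Type*} [MeasurableSpace Ω] {P : Measure Ω}

def meanCompress (P : Measure Ω) (v : Ω → ℝ) : ℝ := ∫ ω, compress (ENNReal.ofReal (v ω)) ∂P

lemma abs_meanCompress_le [IsFiniteMeasure P] (v : Ω → ℝ) : |meanCompress P v| ≤ P.real univ := by
  simpa [meanCompress] using norm_integral_le_of_norm_le_const (μ := P)
    (ae_of_all _ fun ω => norm_compress_le_one (ENNReal.ofReal (v ω)))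

lemma measurable_compress_ofReal {v : Ω → ℝ} (hv : Measurable v) :
    Measurable fun ω => compress (ENNReal.ofReal (v ω)) :=
  continuous_compress.measurable.comp (ENNReal.measurable_ofReal.comp hv)

lemma integrable_compress_ofReal [IsFiniteMeasure P] {v : Ω → ℝ} (hv : Measurable v) :
    Integrable (fun ω => compress (ENNReal.ofReal (v ω))) P :=
  .of_bound (measurable_compress_ofReal hv).aestronglyMeasurable 1
    (ae_of_all _ fun ω => norm_compress_le_one (ENNReal.ofReal (v ω)))

lemma meanCompress_add_mul_measureReal_le [IsFiniteMeasure P] {a b : Ω → ℝ}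
    (ha : Measurable a) (hb : Measurable b) (ha0 : 0 ≤ᵐ[P] a) (hb0 : 0 ≤ᵐ[P] b) {α δ : ℝ}
    (hgain : ∀ x y : ℝ≥0∞, α ≤ |compress x - compress y| →
      (compress x + compress y) / 2 + δ ≤ compress ((x + y) / 2)) :
    (meanCompress P a + meanCompress P b) / 2 +
        δ * P.real {ω | α ≤ |compress (ENNReal.ofReal (a ω)) - compress (ENNReal.ofReal (b ω))|} ≤
      meanCompress P fun ω => (a ω + b ω) / 2 := by
  set A := {ω | α ≤ |compress (ENNReal.ofReal (a ω)) - compress (ENNReal.ofReal (b ω))|}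
  have hA : MeasurableSet A := measurableSet_le measurable_const
    ((measurable_compress_ofReal ha).sub (measurable_compress_ofReal hb)).abs
  have hpt : ∀ᵐ ω ∂P, (compress (ENNReal.ofReal (a ω)) + compress (ENNReal.ofReal (b ω))) / 2 +
      A.indicator (fun _ => δ) ω ≤ compress (ENNReal.ofReal ((a ω + b ω) / 2)) := by
    filter_upwards [ha0, hb0] with ω haω hbω
    rw [ENNReal.ofReal_div_of_pos two_pos, ENNReal.ofReal_add haω hbω, ENNReal.ofReal_ofNat]
    by_cases hω : ω ∈ A
    · rw [indicator_of_mem hω]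
      exact hgain _ _ hω
    · rw [indicator_of_notMem hω, add_zero]
      exact compress_midpoint_le _ _
  have hia := integrable_compress_ofReal (P := P) ha
  have hib := integrable_compress_ofReal (P := P) hb
  have hiab : Integrable (fun ω => (compress (ENNReal.ofReal (a ω)) +
      compress (ENNReal.ofReal (b ω))) / 2) P := (hia.add hib).div_const 2
  calc (meanCompress P a + meanCompress P b) / 2 + δ * P.real A
      = ∫ ω, ((compress (ENNReal.ofReal (a ω)) + compress (ENNReal.ofReal (b ω))) / 2 +
          A.indicator (fun _ => δ) ω) ∂P := by
        rw [integral_add hiab ((integrable_const δ).indicator hA),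
          integral_div, integral_add hia hib, integral_indicator_const _ hA, smul_eq_mul, mul_comm]
        rfl
    _ ≤ _ := integral_mono_ae (hiab.add ((integrable_const δ).indicator hA))
        (integrable_compress_ofReal ((ha.add hb).div_const 2)) hpt

lemma measure_le_of_meanCompress_near_max [IsFiniteMeasure P] {T : Set (Ω → ℝ)}
    (hT : Convex ℝ T) (hTm : T ⊆ {u | Measurable u ∧ 0 ≤ᵐ[P] u}) {a b : Ω → ℝ} (ha : a ∈ T)
    (hb : b ∈ T) {α δ : ℝ} (hgain : ∀ x y : ℝ≥0∞, α ≤ |compress x - compress y| →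
      (compress x + compress y) / 2 + δ ≤ compress ((x + y) / 2)) (hδ : 0 < δ)
    (ha_max : ∀ u ∈ T, meanCompress P u < meanCompress P a + δ * α)
    (hb_max : ∀ u ∈ T, meanCompress P u < meanCompress P b + δ * α) :
    P {ω | α ≤ dist (compress (ENNReal.ofReal (a ω))) (compress (ENNReal.ofReal (b ω)))} ≤
      ENNReal.ofReal α := by
  have hmid : (fun ω => (a ω + b ω) / 2) ∈ T := by
    convert hT ha hb (by norm_num : (0 : ℝ) ≤ 1 / 2) (by norm_num : (0 : ℝ) ≤ 1 / 2)
      (by norm_num) using 1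
    ext ω
    simp only [Pi.add_apply, Pi.smul_apply, smul_eq_mul]
    ring
  have hgap := meanCompress_add_mul_measureReal_le (hTm ha).1 (hTm hb).1 (hTm ha).2 (hTm hb).2 hgain
  have hmeasure : P.real {ω | α ≤ |compress (ENNReal.ofReal (a ω)) -
      compress (ENNReal.ofReal (b ω))|} ≤ α := by
    nlinarith [ha_max _ hmid, hb_max _ hmid]
  simp_rw [Real.dist_eq]
  rw [← ofReal_measureReal]
  exact ENNReal.ofReal_le_ofReal hmeasure

theorem exists_tendsto_ae_of_mem_tailHull [IsFiniteMeasure P] {w : ℕ → Ω → ℝ}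
    (hw : ∀ n, Measurable (w n)) (hw0 : ∀ n, 0 ≤ᵐ[P] w n) :
    ∃ (v : ℕ → Ω → ℝ) (h : Ω → ℝ≥0∞), Measurable h ∧ (∀ n, v n ∈ tailHull w n) ∧
      ∀ᵐ ω ∂P, Tendsto (fun n => ENNReal.ofReal (v n ω)) atTop (𝓝 (h ω)) := by
  have hT := tailHull_subset_measurable_ae_nonneg (P := P) hw hw0
  obtain ⟨v, hvT, hvmax⟩ := exists_seq_asymptotically_maximizing (tailHull_antitone w)
    (fun n => ⟨_, mem_tailHull_self w n⟩) (abs_meanCompress_le (P := P))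
  obtain ⟨ns, hns, hae⟩ := exists_strictMono_ae_cauchySeq (P := P)
      (X := fun n ω => compress (ENNReal.ofReal (v n ω))) fun α hα => by
    obtain ⟨δ, hδ, hgain⟩ := exists_compress_midpoint_gain hα
    obtain ⟨N, hN⟩ := hvmax (δ * α) (by positivity)
    exact ⟨N, fun m hm n hn => measure_le_of_meanCompress_near_max (convex_convexHull ℝ _) (hT N)
      (tailHull_antitone w hm (hvT m)) (tailHull_antitone w hn (hvT n)) hgain hδ (hN m hm)
      (hN n hn)⟩
  refine ⟨fun j => v (ns j), fun ω => limsup (fun j => ENNReal.ofReal (v (ns j) ω)) atTop,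
    .limsup fun j => ENNReal.measurable_ofReal.comp (hT _ (hvT _)).1,
    fun j => tailHull_antitone w (hns.id_le j) (hvT (ns j)), ?_⟩
  filter_upwards [hae] with ω hω
  obtain ⟨l, hl⟩ := cauchySeq_tendsto_of_complete hω
  obtain ⟨c, hc⟩ := exists_tendsto_of_tendsto_compress hl
  rwa [hc.limsup_eq]

end Komlos

end

theorem stmt15_general {Ω : Type*} [MeasurableSpace Ω] (P : Measure Ω)
    [IsProbabilityMeasure P]
    (f : ℕ → Ω → ℝ)
    (hfmeas : ∀ n, Measurable (f n)) (hfnn : ∀ n, 0 ≤ᵐ[P] f n)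
    (g : Ω → ENNReal)
    (hg : ∀ n, g ∈ SolidHull P (LimitsOfConvexTail P f n)) :
    ∃ h : Ω → ENNReal, (∀ n, h ∈ LimitsOfConvexTail P f n) ∧ g ≤ᵐ[P] h := by
  choose H hH hgH using fun n => (hg n).2
  choose u hu hut using fun n => (hH n).2
  have hf := tailHull_subset_measurable_ae_nonneg hfmeas hfnn
  obtain ⟨j, hj⟩ := exists_ae_tendsto_dist_diagonal (P := P)
    (X := fun n j ω => compress (ENNReal.ofReal (u n j ω))) (Y := fun n ω => compress (H n ω))
    (fun n j => (measurable_compress_ofReal (hf n (hu n j)).1).aestronglyMeasurable)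
    (fun n => (hut n).mono fun ω hω => (continuous_compress.tendsto _).comp hω)
  obtain ⟨v, h, hh, hv, hvt⟩ := exists_tendsto_ae_of_mem_tailHull (P := P)
    (fun n => (hf n (hu n (j n))).1) (fun n => (hf n (hu n (j n))).2)
  have hvf : ∀ n, v n ∈ tailHull f n := fun n =>
    tailHull_subset_of_forall_mem (fun k => hu k (j k)) n (hv n)
  refine ⟨h, fun n => ⟨hh, fun i => v (i + n),
    fun i => tailHull_antitone f le_add_self (hvf (i + n)),
    hvt.mono fun ω hω => hω.comp (tendsto_add_atTop_nat n)⟩, ?_⟩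
  filter_upwards [ae_all_iff.2 hgH, hj, hvt] with ω hgω hjω hvω
  exact (le_liminf_of_tendsto_dist_compress hgω hjω).trans
    (liminf_le_of_tendsto_of_mem_tailHull hv hvω)

theorem stmt15 {Ω : Type*} [MeasurableSpace Ω] (P : Measure Ω)
    [IsProbabilityMeasure P]
    (f : ℕ → Ω → ℝ)
    (hfmeas : ∀ n, Measurable (f n)) (hfnn : ∀ n, 0 ≤ᵐ[P] f n)
    (g : Ω → ENNReal) (hgmeas : Measurable g)
    (hg : ∀ n, g ∈ SolidHull P (LimitsOfConvexTail P f n)) :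
    ∃ h : Ω → ENNReal, (∀ n, h ∈ LimitsOfConvexTail P f n) ∧ g ≤ᵐ[P] h :=
  stmt15_general P f hfmeas hfnn g hg
end

section
/- Let (Ω, 𝓕, P) be a probability space and let S be a nonempty set of nonnegative a.e.-finite measurable functions that is convex, solid (if h ∈ S, g is measurable and 0 ≤ g ≤ h a.e., then g ∈ S), bounded in probability, and closed under convergence in probability. Then there exists a probability measure Q equivalent to P such that sup_{h∈S} E_Q[h] < ∞. -/
/-!
Yan's argument. Let `D` be the set of `x ∈ L²(P)` lying a.e. below some element of `S`: it is
convex, downward closed and bounded in probability. Boundedness in probability keeps `c • 1_A`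
out of the closure of `D` for large `c` whenever `P A > 0`, so Hahn–Banach and Riesz give
`Y ≥ 0` in `L²` with `⟪x, Y⟫ ≤ 1` on `D` and `Y > 0` on a non-null part of `A`; by monotone
convergence through truncations, `E[Y h] ≤ 1` for every `h ∈ S`. The supports of such densities
(capped at `1`) are closed under countable unions, via dyadic convex combinations, so one of them
has full measure; normalising it gives `dQ/dP`.
-/

open MeasureTheory Filter Set

open scoped ENNReal Topology InnerProductSpace

theorem tsum_geometric_inv_two_add_one : ∑' n : ℕ, (2⁻¹ : ℝ≥0∞) ^ (n + 1) = 1 := by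
  rw [ENNReal.tsum_geometric_add_one, ENNReal.one_sub_inv_two, inv_inv,
    ENNReal.inv_mul_cancel two_ne_zero ENNReal.ofNat_ne_top]

section

variable {Ω : Type*}

theorem support_dyadic_tsum (Z : ℕ → Ω → ℝ≥0∞) :
    Function.support (fun ω => ∑' n, 2⁻¹ ^ (n + 1) * Z n ω) = ⋃ n, Function.support (Z n) := by
  ext ω
  simp [ENNReal.tsum_eq_zero]

variable [MeasurableSpace Ω]

theorem exists_mem_measure_compl_eq_zero_of_iUnion_mem {μ : Measure Ω} [IsFiniteMeasure μ]
    {𝒮 : Set (Set Ω)} (h_meas : ∀ s ∈ 𝒮, MeasurableSet s) (h_ne : 𝒮.Nonempty)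
    (h_iUnion : ∀ f : ℕ → Set Ω, (∀ n, f n ∈ 𝒮) → ⋃ n, f n ∈ 𝒮)
    (h_pos : ∀ A, MeasurableSet A → 0 < μ A → ∃ s ∈ 𝒮, 0 < μ (A ∩ s)) :
    ∃ s ∈ 𝒮, μ sᶜ = 0 := by
  obtain ⟨u, -, hu_lim, hu_mem⟩ := exists_seq_tendsto_sSup (h_ne.image μ) (OrderTop.bddAbove _)
  choose f hf hfu using hu_mem
  set U := ⋃ n, f n
  have hU : U ∈ 𝒮 := h_iUnion f hf
  have hU_max : ∀ s ∈ 𝒮, μ s ≤ μ U := fun s hs =>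
    (le_sSup (mem_image_of_mem μ hs)).trans
      (le_of_tendsto' hu_lim fun n => hfu n ▸ measure_mono (subset_iUnion f n))
  refine ⟨U, hU, ?_⟩
  by_contra hUc
  obtain ⟨t, ht, hUt⟩ := h_pos _ (h_meas U hU).compl (pos_iff_ne_zero.2 hUc)
  -- `g` enumerates `t, f 0, f 1, …`, so its union in `𝒮` contains `U ∪ t`
  let g : ℕ → Set Ω := fun n => Nat.casesOn n t f
  have hg : ⋃ n, g n ∈ 𝒮 := h_iUnion g (by rintro (_ | n); exacts [ht, hf n])
  have : μ U + μ (Uᶜ ∩ t) ≤ μ U := calc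
    μ U + μ (Uᶜ ∩ t) = μ (U ∪ (Uᶜ ∩ t)) :=
      (measure_union (disjoint_compl_right.mono_right inter_subset_left)
        ((h_meas U hU).compl.inter (h_meas t ht))).symm
    _ ≤ μ (⋃ n, g n) := measure_mono (union_subset
        (iUnion_subset fun n => subset_iUnion g (n + 1))
        (inter_subset_right.trans (subset_iUnion g 0)))
    _ ≤ μ U := hU_max _ hg
  exact (ENNReal.lt_add_right (measure_ne_top μ U) hUt.ne').not_ge this

theorem lintegral_mul_eq_iSup_mul_min {μ : Measure Ω} {F f : Ω → ℝ≥0∞} (hF : Measurable F)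
    (hf : Measurable f) : ∫⁻ ω, F ω * f ω ∂μ = ⨆ n : ℕ, ∫⁻ ω, F ω * min (f ω) n ∂μ := by
  rw [← lintegral_iSup (f := fun n ω => F ω * min (f ω) n)
    (fun n => hF.mul (hf.min measurable_const)) fun m n hmn ω => by dsimp only; gcongr]
  congr with ω
  rw [← ENNReal.mul_iSup, ← inf_iSup_eq, ENNReal.iSup_natCast, inf_top_eq]

theorem exists_forall_measure_lt_le_of_tendsto {μ : Measure Ω} {S : Set (Ω → ℝ)}
    (hS : Tendsto (fun ℓ : ℝ => ⨆ g ∈ S, μ {ω | ℓ < g ω}) atTop (𝓝 0)) {ε : ℝ≥0∞}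
    (hε : 0 < ε) : ∃ ℓ : ℝ, ∀ g ∈ S, μ {ω | ℓ < g ω} ≤ ε :=
  let ⟨ℓ, hℓ⟩ := (hS.eventually (ge_mem_nhds hε)).exists
  ⟨ℓ, fun _ hg => (le_biSup _ hg).trans hℓ⟩

def polarDensities (μ : Measure Ω) (G : Set (Ω → ℝ≥0∞)) : Set (Ω → ℝ≥0∞) :=
  {Z | Measurable Z ∧ Z ≤ 1 ∧ ∀ g ∈ G, ∫⁻ ω, Z ω * g ω ∂μ ≤ 1}

section polarDensities

variable {μ : Measure Ω} {G : Set (Ω → ℝ≥0∞)}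

theorem zero_mem_polarDensities : 0 ∈ polarDensities μ G :=
  ⟨measurable_const, zero_le, fun g _ => by simp⟩

theorem dyadic_tsum_mem_polarDensities (hG : ∀ g ∈ G, Measurable g) {Z : ℕ → Ω → ℝ≥0∞}
    (hZ : ∀ n, Z n ∈ polarDensities μ G) :
    (fun ω => ∑' n, 2⁻¹ ^ (n + 1) * Z n ω) ∈ polarDensities μ G := by
  refine ⟨Measurable.tsum fun n => (hZ n).1.const_mul _, fun ω => ?_, fun g hg => ?_⟩
  · calc ∑' n, 2⁻¹ ^ (n + 1) * Z n ω ≤ ∑' n : ℕ, (2⁻¹ : ℝ≥0∞) ^ (n + 1) * 1 :=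
          ENNReal.tsum_le_tsum fun n => by gcongr; exact (hZ n).2.1 ω
      _ = 1 := by simp only [mul_one, tsum_geometric_inv_two_add_one]
  · have hm : ∀ n, Measurable fun ω => Z n ω * g ω := fun n => (hZ n).1.mul (hG g hg)
    calc ∫⁻ ω, (∑' n, 2⁻¹ ^ (n + 1) * Z n ω) * g ω ∂μ
        = ∑' n, 2⁻¹ ^ (n + 1) * ∫⁻ ω, Z n ω * g ω ∂μ := by
          simp_rw [← ENNReal.tsum_mul_right, mul_assoc]
          rw [lintegral_tsum fun n => ((hm n).const_mul _).aemeasurable]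
          simp_rw [lintegral_const_mul _ (hm _)]
      _ ≤ ∑' n : ℕ, (2⁻¹ : ℝ≥0∞) ^ (n + 1) * 1 :=
          ENNReal.tsum_le_tsum fun n => by gcongr; exact (hZ n).2.2 g hg
      _ = 1 := by simp only [mul_one, tsum_geometric_inv_two_add_one]

theorem exists_mem_polarDensities_ae_ne_zero [IsFiniteMeasure μ] (hG : ∀ g ∈ G, Measurable g)
    (h_pos : ∀ A, MeasurableSet A → 0 < μ A →
      ∃ Z ∈ polarDensities μ G, 0 < μ (A ∩ Function.support Z)) :
    ∃ W ∈ polarDensities μ G, ∀ᵐ ω ∂μ, W ω ≠ 0 := by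
  obtain ⟨_, ⟨W, hW, rfl⟩, hW_ae⟩ :=
    exists_mem_measure_compl_eq_zero_of_iUnion_mem (𝒮 := Function.support '' polarDensities μ G)
      (by rintro _ ⟨Z, hZ, rfl⟩; exact measurableSet_support hZ.1)
      ⟨_, mem_image_of_mem _ zero_mem_polarDensities⟩
      (fun f hf => by
        choose Z hZ hZf using hf
        exact ⟨_, dyadic_tsum_mem_polarDensities hG hZ, by rw [support_dyadic_tsum]; simp [hZf]⟩)
      (fun A hA hμA => by
        obtain ⟨Z, hZ, hAZ⟩ := h_pos A hA hμA
        exact ⟨_, mem_image_of_mem _ hZ, hAZ⟩)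
  exact ⟨W, hW, ae_iff.2 hW_ae⟩

end polarDensities

section Lp

variable {μ : Measure Ω}

instance Lp.instPosSMulMono {p : ℝ≥0∞} : PosSMulMono ℝ (Lp ℝ p μ) where
  smul_le_smul_of_nonneg_left c hc z₁ z₂ hz := by
    rw [← Lp.coeFn_le] at hz ⊢
    filter_upwards [Lp.coeFn_smul c z₁, Lp.coeFn_smul c z₂, hz] with ω h₁ h₂ hω
    rw [h₁, h₂]
    exact mul_le_mul_of_nonneg_left hω hc

def lowerHullLp (S : Set (Ω → ℝ)) (p : ℝ≥0∞) (μ : Measure Ω) : Set (Lp ℝ p μ) :=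
  {x | ∃ g ∈ S, x ≤ᵐ[μ] g}

theorem convex_lowerHullLp {S : Set (Ω → ℝ)} (hS : Convex ℝ S) {p : ℝ≥0∞} :
    Convex ℝ (lowerHullLp S p μ) := by
  rintro x ⟨g₁, hg₁, hx⟩ y ⟨g₂, hg₂, hy⟩ a b ha hb hab
  refine ⟨a • g₁ + b • g₂, hS hg₁ hg₂ ha hb hab, ?_⟩
  filter_upwards [Lp.coeFn_add (a • x) (b • y), Lp.coeFn_smul a x, Lp.coeFn_smul b y, hx, hy]
    with ω h h₁ h₂ hx hy
  simp only [h, Pi.add_apply, h₁, h₂, Pi.smul_apply, smul_eq_mul]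
  gcongr

theorem isLowerSet_lowerHullLp (S : Set (Ω → ℝ)) (p : ℝ≥0∞) : IsLowerSet (lowerHullLp S p μ) :=
  fun _ _ hyx ⟨g, hg, hx⟩ => ⟨g, hg, ((Lp.coeFn_le _ _).2 hyx).trans hx⟩

variable [IsFiniteMeasure μ]

theorem exists_indicatorConstLp_notMem_closure {p : ℝ≥0∞} [Fact (1 ≤ p)] {D : Set (Lp ℝ p μ)}
    (hD : ∀ ε : ℝ≥0∞, 0 < ε → ∃ ℓ : ℝ, ∀ x ∈ D, μ {ω | ℓ < x ω} ≤ ε)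
    {A : Set Ω} (hA : MeasurableSet A) (hμA : 0 < μ A) :
    ∃ c : ℝ, indicatorConstLp p hA (measure_ne_top μ A) c ∉ closure D := by
  obtain ⟨ℓ, hℓ⟩ := hD (μ A / 2) (ENNReal.half_pos hμA.ne')
  set r := |ℓ| + 1
  refine ⟨2 * r, fun hy => ?_⟩
  set y := indicatorConstLp p hA (measure_ne_top μ A) (2 * r)
  have := mem_closure_iff_nhdsWithin_neBot.1 hy
  have hlim : TendstoInMeasure μ (fun x : Lp ℝ p μ => x) (𝓝[D] y) y :=
    tendstoInMeasure_of_tendsto_Lp (f := id) nhdsWithin_le_nhds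
  obtain ⟨x, hx, hxD⟩ := (((hlim (ENNReal.ofReal r) (by positivity)).eventually
    (gt_mem_nhds (ENNReal.half_pos hμA.ne'))).and self_mem_nhdsWithin).exists
  -- on `A`, `y = 2r`, so `x ≤ ℓ < r` forces `|x - y| > r`
  have hA_sub :
      A ≤ᵐ[μ] ({ω | ℓ < x ω} ∪ {ω | ENNReal.ofReal r ≤ edist (x ω) (y ω)} : Set Ω) := by
    filter_upwards [indicatorConstLp_coeFn (p := p) (hs := hA) (hμs := measure_ne_top μ A)
      (c := 2 * r)] with ω hyω hωA
    have hyω' : y ω = 2 * r := by rw [hyω, indicator_of_mem hωA]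
    by_contra h
    change ω ∉ (_ ∪ _ : Set Ω) at h
    have h' : ¬ ℓ < x ω ∧ ¬ ENNReal.ofReal r ≤ ENNReal.ofReal |x ω - 2 * r| := by
      simpa [edist_dist, Real.dist_eq, hyω', abs_nonneg] using h
    rw [ENNReal.ofReal_le_ofReal_iff (abs_nonneg _), not_le, abs_lt] at h'
    linarith [le_abs_self ℓ, h'.1, h'.2.1]
  have := calc μ A ≤ μ {ω | ℓ < x ω} + μ {ω | ENNReal.ofReal r ≤ edist (x ω) (y ω)} :=
        (measure_mono_ae hA_sub).trans (measure_union_le _ _)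
    _ < μ A / 2 + μ A / 2 := ENNReal.add_lt_add_of_le_of_lt (measure_ne_top _ _) (hℓ x hxD) hx
    _ = μ A := ENNReal.add_halves _
  exact this.false

theorem L2.nonneg_of_forall_inner_nonneg {Y : Lp ℝ 2 μ}
    (hY : ∀ z : Lp ℝ 2 μ, 0 ≤ z → 0 ≤ ⟪z, Y⟫_ℝ) : 0 ≤ Y := by
  rw [← Lp.coeFn_nonneg]
  refine ae_nonneg_of_forall_setIntegral_nonneg ((Lp.memLp Y).integrable one_le_two)
    fun B hB _ => ?_
  rw [← L2.inner_indicatorConstLp_one hB (measure_ne_top μ B)]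
  refine hY _ ((Lp.coeFn_nonneg _).1 ?_)
  filter_upwards [indicatorConstLp_coeFn (p := 2) (hs := hB) (hμs := measure_ne_top μ B)
    (c := (1 : ℝ))] with ω hω
  rw [hω]
  exact indicator_nonneg (fun _ _ => zero_le_one) ω

theorem exists_nonneg_inner_le_one_of_notMem_closure {D : Set (Lp ℝ 2 μ)} (hconv : Convex ℝ D)
    (hlow : IsLowerSet D) (h0 : 0 ∈ D) {y : Lp ℝ 2 μ} (hy : y ∉ closure D) :
    ∃ Y : Lp ℝ 2 μ, 0 ≤ Y ∧ (∀ x ∈ D, ⟪x, Y⟫_ℝ ≤ 1) ∧ 1 < ⟪y, Y⟫_ℝ := by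
  obtain ⟨f, u, hfD, hfy⟩ := geometric_hahn_banach_closed_point hconv.closure isClosed_closure hy
  have hfD' : ∀ x ∈ D, f x < u := fun x hx => hfD x (subset_closure hx)
  have hu : 0 < u := by simpa using hfD' 0 h0
  have hf_nonneg : ∀ z, 0 ≤ z → 0 ≤ f z := by
    intro z hz
    by_contra! hfz
    have hmem : -((u / -f z) • z) ∈ D :=
      hlow (neg_nonpos.2 (smul_nonneg (div_nonneg hu.le (neg_nonneg.2 hfz.le)) hz)) h0
    have := hfD' _ hmem
    rw [map_neg, map_smul, smul_eq_mul, div_mul_eq_mul_div, div_neg, neg_neg,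
      mul_div_cancel_right₀ _ hfz.ne] at this
    exact this.false
  set Y₀ := (InnerProductSpace.toDual ℝ (Lp ℝ 2 μ)).symm f
  have hY₀ : ∀ x, ⟪x, Y₀⟫_ℝ = f x := fun x => by
    rw [real_inner_comm, InnerProductSpace.toDual_symm_apply]
  refine ⟨u⁻¹ • Y₀, ?_, fun x hx => ?_, ?_⟩
  · exact smul_nonneg (inv_nonneg.2 hu.le)
      (L2.nonneg_of_forall_inner_nonneg fun z hz => hY₀ z ▸ hf_nonneg z hz)
  · rw [inner_smul_right, hY₀, inv_mul_le_one₀ hu]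
    exact (hfD' x hx).le
  · rw [inner_smul_right, hY₀, one_lt_inv_mul₀ hu]
    exact hfy

theorem measure_inter_pos_of_inner_indicatorConstLp_ne_zero {Y : Lp ℝ 2 μ} (hY : 0 ≤ Y)
    {A : Set Ω} (hA : MeasurableSet A) {c : ℝ}
    (h : ⟪indicatorConstLp 2 hA (measure_ne_top μ A) c, Y⟫_ℝ ≠ 0) :
    0 < μ (A ∩ {ω | 0 < Y ω}) := by
  have hY0 : 0 ≤ᵐ[μ] Y := (Lp.coeFn_nonneg Y).2 hY
  rw [L2.inner_indicatorConstLp_eq_inner_setIntegral ℝ, Real.inner_apply] at h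
  have hpos : 0 < ∫ ω in A, Y ω ∂μ :=
    (setIntegral_nonneg_of_ae_restrict (ae_restrict_of_ae hY0)).lt_of_ne
      (right_ne_zero_of_mul h).symm
  rw [setIntegral_pos_iff_support_of_nonneg_ae (ae_restrict_of_ae hY0)
    ((Lp.memLp Y).integrable one_le_two).integrableOn] at hpos
  refine hpos.trans_le (measure_mono_ae ?_)
  filter_upwards [hY0] with ω hω ⟨hωY, hωA⟩
  exact ⟨hωA, hω.lt_of_ne (Ne.symm hωY)⟩

theorem lintegral_ofReal_mul_le_one {Y : Lp ℝ 2 μ} (hY : 0 ≤ Y) {g : Ω → ℝ} (hg : Measurable g)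
    (hg0 : 0 ≤ᵐ[μ] g) (hYg : ∀ x : Lp ℝ 2 μ, x ≤ᵐ[μ] g → ⟪x, Y⟫_ℝ ≤ 1) :
    ∫⁻ ω, ENNReal.ofReal (Y ω) * ENNReal.ofReal (g ω) ∂μ ≤ 1 := by
  rw [lintegral_mul_eq_iSup_mul_min (Lp.stronglyMeasurable Y).measurable.ennreal_ofReal
    hg.ennreal_ofReal]
  refine iSup_le fun n => ?_
  have hg0n : ∀ᵐ ω ∂μ, 0 ≤ min (g ω) n := by
    filter_upwards [hg0] with ω hω using le_min hω n.cast_nonneg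
  have hgn : MemLp (fun ω => min (g ω) n) 2 μ :=
    MemLp.of_bound (hg.min measurable_const).aestronglyMeasurable n <| by
      filter_upwards [hg0n] with ω hω
      rw [Real.norm_eq_abs, abs_of_nonneg hω]
      exact min_le_right _ _
  set x : Lp ℝ 2 μ := hgn.toLp _
  have hx : x =ᵐ[μ] fun ω => min (g ω) n := hgn.coeFn_toLp
  have hxY : ∀ᵐ ω ∂μ, 0 ≤ x ω * Y ω := by
    filter_upwards [hx, hg0n, (Lp.coeFn_nonneg Y).2 hY] with ω h h₁ h₂
    rw [h]
    exact mul_nonneg h₁ h₂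
  calc ∫⁻ ω, ENNReal.ofReal (Y ω) * min (ENNReal.ofReal (g ω)) n ∂μ
      = ∫⁻ ω, ENNReal.ofReal (x ω * Y ω) ∂μ := by
        refine lintegral_congr_ae ?_
        filter_upwards [hx, hg0n] with ω h h₁
        rw [h, ENNReal.ofReal_mul h₁, mul_comm, ← ENNReal.ofReal_natCast, ENNReal.ofReal_min]
    _ = ENNReal.ofReal ⟪x, Y⟫_ℝ := by
        simp_rw [L2.inner_def, Real.inner_apply]
        have hint : Integrable (fun ω => x ω * Y ω) μ := by
          simpa [Real.inner_apply] using L2.integrable_inner (𝕜 := ℝ) Y x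
        rw [ofReal_integral_eq_lintegral_ofReal hint hxY]
    _ ≤ 1 := ENNReal.ofReal_le_one.2 <| hYg _ <| by
        filter_upwards [hx] with ω h
        rw [h]
        exact min_le_left _ _

theorem exists_mem_polarDensities_inter_support_pos {S : Set (Ω → ℝ)} (hne : S.Nonempty)
    (hSmeas : ∀ g ∈ S, Measurable g) (hSnn : ∀ g ∈ S, 0 ≤ᵐ[μ] g) (hSconvex : Convex ℝ S)
    (hSbdd : ∀ ε : ℝ≥0∞, 0 < ε → ∃ ℓ : ℝ, ∀ g ∈ S, μ {ω | ℓ < g ω} ≤ ε)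
    {A : Set Ω} (hA : MeasurableSet A) (hμA : 0 < μ A) :
    ∃ Z ∈ polarDensities μ ((fun g ω => ENNReal.ofReal (g ω)) '' S),
      0 < μ (A ∩ Function.support Z) := by
  have hD0 : 0 ∈ lowerHullLp S 2 μ :=
    let ⟨g, hg⟩ := hne
    ⟨g, hg, (Lp.coeFn_zero ℝ 2 μ).trans_le (hSnn g hg)⟩
  have hD_bdd : ∀ ε : ℝ≥0∞, 0 < ε → ∃ ℓ : ℝ, ∀ x ∈ lowerHullLp S 2 μ, μ {ω | ℓ < x ω} ≤ ε :=
    fun ε hε =>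
      let ⟨ℓ, hℓ⟩ := hSbdd ε hε
      ⟨ℓ, fun _ ⟨g, hg, hx⟩ => (measure_mono_ae (by
        filter_upwards [hx] with ω h h' using h'.trans_le h)).trans (hℓ g hg)⟩
  obtain ⟨c, hc⟩ := exists_indicatorConstLp_notMem_closure hD_bdd hA hμA
  obtain ⟨Y, hY0, hYD, hYc⟩ := exists_nonneg_inner_le_one_of_notMem_closure
    (convex_lowerHullLp hSconvex) (isLowerSet_lowerHullLp S 2) hD0 hc
  refine ⟨fun ω => min (ENNReal.ofReal (Y ω)) 1,
    ⟨(Lp.stronglyMeasurable Y).measurable.ennreal_ofReal.min measurable_const,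
      fun ω => min_le_right _ _, ?_⟩, ?_⟩
  · rintro _ ⟨g, hg, rfl⟩
    exact (lintegral_mono fun ω => by gcongr; exact min_le_left _ _).trans
      (lintegral_ofReal_mul_le_one hY0 (hSmeas g hg) (hSnn g hg) fun x hx => hYD x ⟨g, hg, hx⟩)
  · refine (measure_inter_pos_of_inner_indicatorConstLp_ne_zero hY0 hA
      (zero_lt_one.trans hYc).ne').trans_le (measure_mono (inter_subset_inter_right _ ?_))
    intro ω hω
    simpa using hω

end Lp

end

theorem stmt16_general {Ω : Type*} [MeasurableSpace Ω] (P : Measure Ω)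
    [IsProbabilityMeasure P]
    (S : Set (Ω → ℝ)) (hne : S.Nonempty)
    (hSmeas : ∀ h ∈ S, Measurable h) (hSnn : ∀ h ∈ S, 0 ≤ᵐ[P] h)
    (hSconvex : Convex ℝ S)
    (hSbdd : Tendsto (fun ℓ : ℝ => ⨆ h ∈ S, P {ω | ℓ < h ω}) atTop (nhds 0)) :
    ∃ Q : Measure Ω, IsProbabilityMeasure Q ∧ P ≪ Q ∧ Q ≪ P ∧
      (⨆ h ∈ S, ∫⁻ ω, ENNReal.ofReal (h ω) ∂Q) < ⊤ := by
  obtain ⟨W, ⟨hW_meas, hW_le, hW_S⟩, hW_pos⟩ := exists_mem_polarDensities_ae_ne_zero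
    (by rintro _ ⟨g, hg, rfl⟩; exact (hSmeas g hg).ennreal_ofReal)
    fun A hA hPA => exists_mem_polarDensities_inter_support_pos hne hSmeas hSnn hSconvex
      (fun ε hε => exists_forall_measure_lt_le_of_tendsto hSbdd hε) hA hPA
  set ν := P.withDensity W
  have hPν : P ≪ ν := withDensity_absolutelyContinuous' hW_meas.aemeasurable hW_pos
  have : IsFiniteMeasure ν := isFiniteMeasure_withDensity
    (ne_top_of_le_ne_top (by simp) (lintegral_mono (g := 1) hW_le))
  have : NeZero ν := ⟨fun h => IsProbabilityMeasure.ne_zero P (by simpa [h] using hPν)⟩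
  refine ⟨(ν univ)⁻¹ • ν, inferInstance,
    hPν.smul_right (ENNReal.inv_ne_zero.2 (measure_ne_top _ _)),
    (withDensity_absolutelyContinuous P W).smul_left _, ?_⟩
  calc ⨆ h ∈ S, ∫⁻ ω, ENNReal.ofReal (h ω) ∂((ν univ)⁻¹ • ν)
      ≤ (ν univ)⁻¹ := iSup₂_le fun h hh => by
        rw [lintegral_smul_measure, lintegral_withDensity_eq_lintegral_mul _ hW_meas
          (hSmeas h hh).ennreal_ofReal]
        exact mul_le_of_le_one_right' (hW_S _ ⟨h, hh, rfl⟩)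
    _ < ⊤ := ENNReal.inv_lt_top.2 (NeZero.pos _)

theorem stmt16 {Ω : Type*} [MeasurableSpace Ω] (P : Measure Ω)
    [IsProbabilityMeasure P]
    (S : Set (Ω → ℝ)) (hne : S.Nonempty)
    (hSmeas : ∀ h ∈ S, Measurable h) (hSnn : ∀ h ∈ S, 0 ≤ᵐ[P] h)
    (hSconvex : Convex ℝ S)
    (hSsolid : ∀ h ∈ S, ∀ g : Ω → ℝ, Measurable g → 0 ≤ᵐ[P] g → g ≤ᵐ[P] h → g ∈ S)
    (hSbdd : Tendsto (fun ℓ : ℝ => ⨆ h ∈ S, P {ω | ℓ < h ω}) atTop (nhds 0))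
    (hSclosed : ∀ (h : ℕ → Ω → ℝ) (g : Ω → ℝ), (∀ n, h n ∈ S) → Measurable g →
      TendstoInMeasure P h atTop g → g ∈ S) :
    ∃ Q : Measure Ω, IsProbabilityMeasure Q ∧ P ≪ Q ∧ Q ≪ P ∧
      (⨆ h ∈ S, ∫⁻ ω, ENNReal.ofReal (h ω) ∂Q) < ⊤ :=
  stmt16_general P S hne hSmeas hSnn hSconvex hSbdd
end
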